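/- arXiv:1803.00281 — 2 statements merged into one kernel-verified Lean document; each statement's English description precedes it below -/
import Mathlib

section
/- Let n ≥ 5 and let D' = ↔K_n − M' where ↔K_n[M'] is a directed path of length 3 with an extra 2-cycle on its middle edge, specifically M' = {u₁u₂, u₂u₄, u₄u₂, u₄u₃} or M' = {u₁u₂, u₂u₃, u₃u₂, u₃u₄} for distinct vertices u₁,u₂,u₃,u₄. Then κ_2(D') ≤ n−3. -/
/-- A digraph on vertex type `V`: a loopless binary arc relation. -/
structure Dgraph (V : Type) where
  Arc : V → V → Prop
  loopless : ∀ v, ¬ Arc v v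

namespace Dgraph

variable {V : Type}

/-- A digraph is strong (strongly connected) if every vertex reaches every vertex. -/
def IsStrong (D : Dgraph V) : Prop := ∀ u v : V, Relation.ReflTransGen D.Arc u v

/-- A strong subgraph of `D`: a vertex set together with an arc relation contained
in `D`'s arcs, whose arcs stay inside the vertex set, and which is strongly
connected on its vertex set. -/
structure StrongSub (D : Dgraph V) where
  verts : Set V
  Arc : V → V → Prop
  arc_sub : ∀ u v, Arc u v → D.Arc u v
  arc_mem : ∀ u v, Arc u v → u ∈ verts ∧ v ∈ verts
  strong : ∀ u ∈ verts, ∀ v ∈ verts, Relation.ReflTransGen Arc u v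

/-- `κ_S(D)`: the maximum number of pairwise internally disjoint strong subgraphs
of `D` containing `S` (they share exactly the vertices of `S` and no arcs). -/
noncomputable def kappaS (D : Dgraph V) (S : Set V) : ℕ :=
  sSup {p : ℕ | ∃ f : Fin p → StrongSub D,
    (∀ i, S ⊆ (f i).verts) ∧
    (∀ i j, i ≠ j → (f i).verts ∩ (f j).verts = S) ∧
    (∀ i j, i ≠ j → ∀ u v, ¬ ((f i).Arc u v ∧ (f j).Arc u v))}

/-- The strong subgraph `k`-connectivity `κ_k(D)`. -/
noncomputable def kappa [Fintype V] (D : Dgraph V) (k : ℕ) : ℕ :=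
  sInf {m : ℕ | ∃ S : Finset V, S.card = k ∧ kappaS D ↑S = m}

/-- The number of arcs of a digraph. -/
noncomputable def arcCount (D : Dgraph V) : ℕ :=
  Nat.card {p : V × V // D.Arc p.1 p.2}

/-- Delete the arc `e` from `D`. -/
def deleteArc (D : Dgraph V) (e : V × V) : Dgraph V where
  Arc u v := D.Arc u v ∧ (u, v) ≠ e
  loopless v h := D.loopless v h.1

/-- `D` is minimally strong subgraph `(k,ℓ)`-connected. -/
noncomputable def MinSSC [Fintype V] (D : Dgraph V) (k ℓ : ℕ) : Prop :=
  ℓ ≤ kappa D k ∧ ∀ e : V × V, D.Arc e.1 e.2 → kappa (deleteArc D e) k ≤ ℓ - 1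

/-- Minimum out-degree `δ⁺(D)`. -/
noncomputable def minOutDeg [Fintype V] (D : Dgraph V) : ℕ :=
  sInf (Set.range fun v => Nat.card {w : V // D.Arc v w})

/-- Minimum in-degree `δ⁻(D)`. -/
noncomputable def minInDeg [Fintype V] (D : Dgraph V) : ℕ :=
  sInf (Set.range fun v => Nat.card {w : V // D.Arc w v})

/-- The subdigraph of `D` induced on a vertex set `W`. -/
def induce (D : Dgraph V) (W : Set V) : Dgraph W where
  Arc u v := D.Arc u v
  loopless v h := D.loopless v h

/-- The strong vertex-connectivity `κ(D)`: the minimum number of vertices whose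
removal leaves a non-strong digraph, or `n - 1` if there is no such set. -/
noncomputable def vertConn [Fintype V] (D : Dgraph V) : ℕ :=
  sInf ({Fintype.card V - 1} ∪
    {m : ℕ | ∃ Q : Finset V, Q.card = m ∧ ¬ IsStrong (D.induce (↑Q : Set V)ᶜ)})

/-- `D` is symmetric if the reverse of every arc is an arc. -/
def IsSymmetric (D : Dgraph V) : Prop := ∀ u v, D.Arc u v → D.Arc v u

/-- The underlying undirected (simple) graph of a digraph. -/
def underlying (D : Dgraph V) : SimpleGraph V where
  Adj u v := D.Arc u v ∨ D.Arc v u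
  symm := ⟨by intro u v h; tauto⟩
  loopless := ⟨by intro v h; rcases h with h | h <;> exact D.loopless v h⟩

/-- The minimum number of arcs of a minimally strong subgraph `(k,ℓ)`-connected
digraph on `n` vertices. -/
noncomputable def fMin (n k ℓ : ℕ) : ℕ :=
  sInf {m : ℕ | ∃ D : Dgraph (Fin n), MinSSC D k ℓ ∧ arcCount D = m}

/-- The maximum number of arcs of a minimally strong subgraph `(k,ℓ)`-connected
digraph on `n` vertices. -/
noncomputable def FMax (n k ℓ : ℕ) : ℕ :=
  sSup {m : ℕ | ∃ D : Dgraph (Fin n), MinSSC D k ℓ ∧ arcCount D = m}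

end Dgraph

/-!
Take `S = {u₁, u₂}` and let `w` be the other tail of a deleted arc into `u₂` (`u₄` or `u₃`).
No arc of `D'` enters `u₂` from `T = {u₁, u₂, w}`, so in every strong subgraph containing `S`
the last arc of a path from `u₁` to `u₂` starts outside `T`. Internally disjoint such subgraphs
therefore own distinct vertices outside `T`, and there are at most `n - 3` of them.
-/

namespace Dgraph

variable {V : Type} {D : Dgraph V}

theorem StrongSub.exists_mem_notMem_of_forall_not_arc (H : StrongSub D) {T : Set V} {u v : V}
    (hu : u ∈ H.verts) (hv : v ∈ H.verts) (huv : u ≠ v) (hT : ∀ x ∈ T, ¬ D.Arc x v) :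
    ∃ x ∈ H.verts, x ∉ T := by
  rcases (H.strong u hu v hv).cases_tail with rfl | ⟨x, -, hxv⟩
  · exact absurd rfl huv
  · exact ⟨x, (H.arc_mem x v hxv).1, fun hx => hT x hx (H.arc_sub x v hxv)⟩

theorem kappaS_le_card_sub_card [Fintype V] (S : Set V) (T : Finset V) (hST : S ⊆ T)
    (hT : ∀ H : StrongSub D, S ⊆ H.verts → ∃ x ∈ H.verts, x ∉ T) :
    D.kappaS S ≤ Fintype.card V - T.card := by
  classical
  refine csSup_le' ?_
  rintro p ⟨f, hS, hdisj, -⟩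
  choose g hg hgT using fun i => hT (f i) (hS i)
  have hmaps : ∀ i ∈ (Finset.univ : Finset (Fin p)), g i ∈ Tᶜ := fun i _ =>
    Finset.mem_compl.2 (hgT i)
  have hinj : Set.InjOn g (Finset.univ : Finset (Fin p)) := by
    intro i _ j _ hij
    by_contra hne
    have hS' : g i ∈ S := hdisj i j hne ▸ ⟨hg i, hij ▸ hg j⟩
    exact hgT i (hST hS')
  simpa [Finset.card_compl] using Finset.card_le_card_of_injOn g hmaps hinj

theorem kappa_le_kappaS [Fintype V] (S : Finset V) : D.kappa S.card ≤ D.kappaS S :=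
  Nat.sInf_le ⟨S, rfl, rfl⟩

theorem kappa_two_le_card_sub_card_of_forall_not_arc [Fintype V] [DecidableEq V] {T : Finset V}
    {u v : V} (huv : u ≠ v) (hu : u ∈ T) (hv : v ∈ T) (hT : ∀ x ∈ T, ¬ D.Arc x v) :
    D.kappa 2 ≤ Fintype.card V - T.card := by
  have hcard : ({u, v} : Finset V).card = 2 := Finset.card_pair huv
  calc D.kappa 2 = D.kappa ({u, v} : Finset V).card := by rw [hcard]
    _ ≤ D.kappaS ({u, v} : Finset V) := kappa_le_kappaS _
    _ ≤ Fintype.card V - T.card := by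
      refine kappaS_le_card_sub_card _ T ?_ fun H hH => ?_
      · simp [Set.insert_subset_iff, hu, hv]
      · exact H.exists_mem_notMem_of_forall_not_arc (hH (by simp)) (hH (by simp)) huv hT

end Dgraph

theorem stmt11_general {V : Type} [Fintype V] (n : ℕ)
    (hn : Fintype.card V = n)
    (u1 u2 u3 u4 : V)
    (h12 : u1 ≠ u2) (h13 : u1 ≠ u3) (h14 : u1 ≠ u4)
    (h23 : u2 ≠ u3) (h24 : u2 ≠ u4)
    (M' : Set (V × V))
    (hM : M' = {(u1, u2), (u2, u4), (u4, u2), (u4, u3)} ∨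
          M' = {(u1, u2), (u2, u3), (u3, u2), (u3, u4)})
    (D' : Dgraph V) (hD' : ∀ u v, D'.Arc u v ↔ u ≠ v ∧ (u, v) ∉ M') :
    D'.kappa 2 ≤ n - 3 := by
  classical
  obtain ⟨w, hw1, hw2, h1M, hwM⟩ :
      ∃ w : V, u1 ≠ w ∧ u2 ≠ w ∧ (u1, u2) ∈ M' ∧ (w, u2) ∈ M' := by
    rcases hM with rfl | rfl
    · exact ⟨u4, h14, h24, by simp, by simp⟩
    · exact ⟨u3, h13, h23, by simp, by simp⟩
  have hT : ∀ x ∈ ({u1, u2, w} : Finset V), ¬ D'.Arc x u2 := by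
    simp only [Finset.mem_insert, Finset.mem_singleton, hD']
    rintro x (rfl | rfl | rfl) <;> tauto
  have hcard : ({u1, u2, w} : Finset V).card = 3 :=
    Finset.card_eq_three.2 ⟨u1, u2, w, h12, hw1, hw2, rfl⟩
  simpa [hcard, hn] using
    Dgraph.kappa_two_le_card_sub_card_of_forall_not_arc h12 (by simp) (by simp) hT

/-- For `n ≥ 5`, if `D' = ↔K_n - M'` where
`M' = {u₁u₂, u₂u₄, u₄u₂, u₄u₃}` or `M' = {u₁u₂, u₂u₃, u₃u₂, u₃u₄}` for distinct
vertices `u₁, u₂, u₃, u₄`, then `κ₂(D') ≤ n - 3`. -/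
theorem stmt11 {V : Type} [Fintype V] (n : ℕ)
    (hn : Fintype.card V = n) (h5 : 5 ≤ n)
    (u1 u2 u3 u4 : V)
    (h12 : u1 ≠ u2) (h13 : u1 ≠ u3) (h14 : u1 ≠ u4)
    (h23 : u2 ≠ u3) (h24 : u2 ≠ u4) (h34 : u3 ≠ u4)
    (M' : Set (V × V))
    (hM : M' = {(u1, u2), (u2, u4), (u4, u2), (u4, u3)} ∨
          M' = {(u1, u2), (u2, u3), (u3, u2), (u3, u4)})
    (D' : Dgraph V) (hD' : ∀ u v, D'.Arc u v ↔ u ≠ v ∧ (u, v) ∉ M') :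
    D'.kappa 2 ≤ n - 3 :=
  stmt11_general n hn u1 u2 u3 u4 h12 h13 h14 h23 h24 M' hM D' hD'
end

section
/- For every 2 ≤ k ≤ n, f(n,k,1) = n: the directed cycle on n vertices is minimally strong subgraph (k,1)-connected and has the minimum possible number of arcs. -/
/-! A strong subgraph containing two distinct vertices `s, t` has an arc out of `s`. Hence in a
digraph with `κ_k ≥ 1` every vertex has an out-arc, so it has at least `n` arcs. The directed
cycle attains the bound: it is strong, so the whole cycle is a strong subgraph through any `k`
vertices, while deleting an arc leaves a path, in which no two distinct vertices reach each other
and so no strong subgraph contains `k ≥ 2` vertices. -/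

namespace Dgraph

variable {V : Type} {D : Dgraph V}

def packingSizes (D : Dgraph V) (S : Set V) : Set ℕ :=
  {p : ℕ | ∃ f : Fin p → StrongSub D,
    (∀ i, S ⊆ (f i).verts) ∧
    (∀ i j, i ≠ j → (f i).verts ∩ (f j).verts = S) ∧
    (∀ i j, i ≠ j → ∀ u v, ¬ ((f i).Arc u v ∧ (f j).Arc u v))}

theorem kappaS_eq_sSup_packingSizes (D : Dgraph V) (S : Set V) :
    kappaS D S = sSup (packingSizes D S) := rfl

theorem zero_mem_packingSizes (D : Dgraph V) (S : Set V) : 0 ∈ packingSizes D S :=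
  ⟨Fin.elim0, fun i => i.elim0, fun i => i.elim0, fun i => i.elim0⟩

theorem StrongSub.exists_arc {H : StrongSub D} {s t : V} (hs : s ∈ H.verts) (ht : t ∈ H.verts)
    (hst : s ≠ t) : ∃ w, H.Arc s w := by
  rcases (H.strong s hs t ht).cases_head with rfl | ⟨w, hw, -⟩
  · exact absurd rfl hst
  · exact ⟨w, hw⟩

/-- Arc-disjoint strong subgraphs through two distinct vertices `s, t` use distinct arcs out of
`s`, so there are at most `|V|` of them. -/
theorem le_card_of_mem_packingSizes [Fintype V] {S : Set V} (hS : S.Nontrivial) {p : ℕ}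
    (hp : p ∈ packingSizes D S) : p ≤ Fintype.card V := by
  obtain ⟨f, hmem, -, hdisj⟩ := hp
  obtain ⟨s, hs, t, ht, hst⟩ := hS
  choose g hg using fun i => (f i).exists_arc (hmem i hs) (hmem i ht) hst
  have hinj : Function.Injective g := fun i j hij => by
    by_contra hne
    exact hdisj i j hne s (g i) ⟨hg i, hij ▸ hg j⟩
  simpa using Fintype.card_le_of_injective g hinj

theorem one_le_kappaS_iff [Fintype V] {S : Set V} (hS : S.Nontrivial) :
    1 ≤ kappaS D S ↔ ∃ H : StrongSub D, S ⊆ H.verts := by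
  have hbdd : BddAbove (packingSizes D S) :=
    ⟨Fintype.card V, fun _ hp => le_card_of_mem_packingSizes hS hp⟩
  rw [kappaS_eq_sSup_packingSizes]
  constructor
  · intro h
    obtain ⟨f, hf, -, -⟩ := Nat.sSup_mem ⟨0, zero_mem_packingSizes D S⟩ hbdd
    exact ⟨f ⟨0, h⟩, hf _⟩
  · rintro ⟨H, hH⟩
    refine le_csSup hbdd ⟨fun _ => H, fun _ => hH, ?_, ?_⟩ <;>
      exact fun i j hij => absurd (Subsingleton.elim i j) hij

theorem kappa_le_kappaS_s15 [Fintype V] {k : ℕ} {S : Finset V} (hS : S.card = k) :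
    kappa D k ≤ kappaS D S :=
  Nat.sInf_le ⟨S, hS, rfl⟩

theorem le_kappa [Fintype V] {k m : ℕ} (hk : k ≤ Fintype.card V)
    (h : ∀ S : Finset V, S.card = k → m ≤ kappaS D S) : m ≤ kappa D k := by
  obtain ⟨S₀, -, hS₀⟩ := Finset.exists_subset_card_eq (s := Finset.univ) (by simpa using hk)
  refine le_csInf ⟨_, S₀, hS₀, rfl⟩ ?_
  rintro _ ⟨S, hS, rfl⟩
  exact h S hS

theorem one_le_kappa_of_isStrong [Fintype V] {k : ℕ} (hk2 : 2 ≤ k) (hkn : k ≤ Fintype.card V)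
    (hD : D.IsStrong) : 1 ≤ kappa D k := by
  let H : StrongSub D :=
    { verts := Set.univ
      Arc := D.Arc
      arc_sub := fun _ _ h => h
      arc_mem := fun _ _ _ => ⟨trivial, trivial⟩
      strong := fun u _ v _ => hD u v }
  refine le_kappa hkn fun S hS => (one_le_kappaS_iff ?_).2 ⟨H, Set.subset_univ _⟩
  exact Finset.one_lt_card_iff_nontrivial.1 (by omega)

def IsAcyclic (D : Dgraph V) : Prop :=
  ∀ u v, Relation.ReflTransGen D.Arc u v → Relation.ReflTransGen D.Arc v u → u = v

theorem kappa_eq_zero_of_isAcyclic [Fintype V] {k : ℕ} (hk2 : 2 ≤ k)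
    (hkn : k ≤ Fintype.card V) (hD : D.IsAcyclic) : kappa D k = 0 := by
  obtain ⟨S, -, hS⟩ := Finset.exists_subset_card_eq (s := Finset.univ) (by simpa using hkn)
  have hSnt : (S : Set V).Nontrivial := Finset.one_lt_card_iff_nontrivial.1 (by omega)
  suffices kappaS D S = 0 from Nat.eq_zero_of_le_zero (this ▸ kappa_le_kappaS_s15 hS)
  by_contra hne
  obtain ⟨H, hH⟩ := (one_le_kappaS_iff hSnt).1 (Nat.one_le_iff_ne_zero.2 hne)
  obtain ⟨s, hs, t, ht, hst⟩ := hSnt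
  have reach : ∀ u ∈ H.verts, ∀ v ∈ H.verts, Relation.ReflTransGen D.Arc u v :=
    fun u hu v hv => Relation.ReflTransGen.mono H.arc_sub _ _ (H.strong u hu v hv)
  exact hst (hD s t (reach s (hH hs) t (hH ht)) (reach t (hH ht) s (hH hs)))

theorem exists_arc_of_one_le_kappa [Fintype V] {k : ℕ} (hk2 : 2 ≤ k)
    (hkn : k ≤ Fintype.card V) (h : 1 ≤ kappa D k) (v : V) : ∃ w, D.Arc v w := by
  obtain ⟨S, hvS, -, hS⟩ := Finset.exists_subsuperset_card_eq (n := k) (Finset.subset_univ {v})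
    (by rw [Finset.card_singleton]; omega) (by simpa using hkn)
  have hv : v ∈ (S : Set V) := hvS (Finset.mem_singleton_self v)
  have hSnt : (S : Set V).Nontrivial := Finset.one_lt_card_iff_nontrivial.1 (by omega)
  obtain ⟨t, ht, htv⟩ := hSnt.exists_ne v
  obtain ⟨H, hH⟩ := (one_le_kappaS_iff ⟨v, hv, t, ht, htv.symm⟩).1
    (h.trans (kappa_le_kappaS_s15 hS))
  obtain ⟨w, hw⟩ := H.exists_arc (hH hv) (hH ht) htv.symm
  exact ⟨w, H.arc_sub _ _ hw⟩

theorem card_le_arcCount [Fintype V] (h : ∀ v, ∃ w, D.Arc v w) :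
    Fintype.card V ≤ arcCount D := by
  choose g hg using h
  have hinj : Function.Injective fun v => (⟨(v, g v), hg v⟩ : {p : V × V // D.Arc p.1 p.2}) :=
    fun a b hab => congrArg (fun x => x.1.1) hab
  rw [← Nat.card_eq_fintype_card]
  exact Nat.card_le_card_of_injective _ hinj

theorem card_le_arcCount_of_minSSC [Fintype V] {k : ℕ} (hk2 : 2 ≤ k)
    (hkn : k ≤ Fintype.card V) (hD : D.MinSSC k 1) : Fintype.card V ≤ arcCount D :=
  card_le_arcCount (exists_arc_of_one_le_kappa hk2 hkn hD.1)

section Cycle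

open scoped Fin.NatCast

variable {n : ℕ} [NeZero n] {D : Dgraph (Fin n)}

theorem fin_eq_add_one_iff (u v : Fin n) :
    v = u + 1 ↔ (u : ℕ) + 1 = v ∨ ((u : ℕ) = n - 1 ∧ (v : ℕ) = 0) := by
  have hu := u.isLt
  have hv := v.isLt
  rw [Fin.ext_iff, Fin.val_add, Fin.val_one', Nat.add_mod_mod]
  rcases Nat.lt_or_ge ((u : ℕ) + 1) n with h | h
  · rw [Nat.mod_eq_of_lt h]; omega
  · rw [show (u : ℕ) + 1 = n by omega, Nat.mod_self]; omega

theorem reflTransGen_of_forall_add_one {R : Fin n → Fin n → Prop} (hR : ∀ u, R u (u + 1))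
    (u v : Fin n) : Relation.ReflTransGen R u v := by
  have reach : ∀ j : ℕ, Relation.ReflTransGen R u (u + (j : Fin n)) := by
    intro j
    induction j with
    | zero => simpa using Relation.ReflTransGen.refl
    | succ j ih => simpa [add_assoc] using ih.tail (hR _)
  simpa using reach ((v - u : Fin n) : ℕ)

theorem val_add_one_sub_add_one {a u : Fin n} (hu : u ≠ a) :
    ((u + 1 - (a + 1) : Fin n) : ℕ) = ((u - (a + 1) : Fin n) : ℕ) + 1 := by
  have hne : u - a ≠ 0 := sub_ne_zero.2 hu
  have h1 : u + 1 - (a + 1) = u - a := by abel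
  have h2 : u - (a + 1) = u - a - 1 := by abel
  rw [h1, h2, Fin.val_sub_one_of_ne_zero hne]
  have := Fin.val_ne_zero_iff.2 hne
  omega

/-- Along every arc the potential `x ↦ x - (a + 1)` goes up by one. -/
theorem isAcyclic_of_arc_imp (a : Fin n) (hD : ∀ u v, D.Arc u v → v = u + 1 ∧ u ≠ a) :
    D.IsAcyclic := by
  have mono : ∀ x y, Relation.ReflTransGen D.Arc x y →
      ((x - (a + 1) : Fin n) : ℕ) ≤ ((y - (a + 1) : Fin n) : ℕ) := by
    intro x y h
    induction h with
    | refl => exact le_rfl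
    | tail _ hbc ih =>
      obtain ⟨rfl, hb⟩ := hD _ _ hbc
      rw [val_add_one_sub_add_one hb]
      omega
  intro u v huv hvu
  exact sub_left_inj.1 (Fin.ext (le_antisymm (mono u v huv) (mono v u hvu)))

theorem isStrong_of_arc_iff (hD : ∀ u v, D.Arc u v ↔ v = u + 1) : D.IsStrong :=
  reflTransGen_of_forall_add_one fun u => (hD u _).2 rfl

theorem isAcyclic_deleteArc_of_arc_iff (hD : ∀ u v, D.Arc u v ↔ v = u + 1) {e : Fin n × Fin n}
    (he : D.Arc e.1 e.2) : (D.deleteArc e).IsAcyclic := by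
  refine isAcyclic_of_arc_imp e.1 fun u v ⟨huv, hne⟩ => ⟨(hD u v).1 huv, ?_⟩
  rintro rfl
  exact hne (Prod.ext rfl (((hD _ _).1 huv).trans ((hD _ _).1 he).symm))

theorem arcCount_eq_of_arc_iff (hD : ∀ u v, D.Arc u v ↔ v = u + 1) : arcCount D = n := by
  let e : {p : Fin n × Fin n // D.Arc p.1 p.2} ≃ Fin n :=
    { toFun := fun p => p.1.1
      invFun := fun u => ⟨(u, u + 1), (hD u _).2 rfl⟩
      left_inv := by
        rintro ⟨⟨u, v⟩, h⟩
        obtain rfl := (hD u v).1 h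
        rfl
      right_inv := fun _ => rfl }
  rw [arcCount, Nat.card_congr e, Nat.card_eq_fintype_card, Fintype.card_fin]

end Cycle

end Dgraph

/-- For `2 ≤ k ≤ n`, `f(n, k, 1) = n`: the directed cycle on `n` vertices is
minimally strong subgraph `(k,1)`-connected with `n` arcs, which is optimal. -/
theorem stmt15 (n k : ℕ) (hk2 : 2 ≤ k) (hkn : k ≤ n) :
    let C : Dgraph (Fin n) :=
      ⟨fun u v => ((u : ℕ) + 1 = v ∨ ((u : ℕ) = n - 1 ∧ (v : ℕ) = 0)),
        fun v h => by rcases h with h | ⟨h1, h2⟩ <;> omega⟩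
    C.MinSSC k 1 ∧ C.arcCount = n ∧ Dgraph.fMin n k 1 = n := by
  intro C
  have : NeZero n := ⟨by omega⟩
  have hC : ∀ u v, C.Arc u v ↔ v = u + 1 := fun u v => (Dgraph.fin_eq_add_one_iff u v).symm
  have hkn' : k ≤ Fintype.card (Fin n) := by simpa using hkn
  have hMin : C.MinSSC k 1 := by
    refine ⟨Dgraph.one_le_kappa_of_isStrong hk2 hkn' (Dgraph.isStrong_of_arc_iff hC), ?_⟩
    intro _ he
    exact (Dgraph.kappa_eq_zero_of_isAcyclic hk2 hkn'
      (Dgraph.isAcyclic_deleteArc_of_arc_iff hC he)).le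
  have hCount : C.arcCount = n := Dgraph.arcCount_eq_of_arc_iff hC
  refine ⟨hMin, hCount, le_antisymm (Nat.sInf_le ⟨C, hMin, hCount⟩) ?_⟩
  refine le_csInf ⟨n, C, hMin, hCount⟩ ?_
  rintro m ⟨D, hD, rfl⟩
  simpa using Dgraph.card_le_arcCount_of_minSSC hk2 hkn' hD
end
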